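/- arXiv:math/0503063 — 4 statements merged into one kernel-verified Lean document; each statement's English description precedes it below -/
import Mathlib

section
/- Let n be a natural number and C = (c_{ij}) an n×n complex matrix, and for each index i let c_i : ℂⁿ → ℂ be the linear form c_i(x) = Σ_j c_{ij} x_j. Assume that for all indices i, j, k and all x ∈ ℂⁿ one has c_i(x)(c_{kj} − c_{jk}) − c_j(x)(c_{ki} − c_{ik}) + c_k(x)(c_{ji} − c_{ij}) = 0. If C is not symmetric, then for every triple of indices i, j, k the three linear forms c_i, c_j, c_k are linearly dependent over ℂ. -/
/-- If the coefficient matrix `C` of an integrable linear 1-form is not symmetric, then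
for every triple of indices `i, j, k` the linear forms `c_i, c_j, c_k`
(where `c_i(x) = Σ_j c_{ij} x_j`) are linearly dependent over `ℂ`. -/
theorem stmt1 (n : ℕ) (C : Matrix (Fin n) (Fin n) ℂ)
    (hint : ∀ i j k : Fin n, ∀ x : Fin n → ℂ,
      (∑ l, C i l * x l) * (C k j - C j k)
      - (∑ l, C j l * x l) * (C k i - C i k)
      + (∑ l, C k l * x l) * (C j i - C i j) = 0)
    (hsym : ¬ C.IsSymm) :
    ∀ i j k : Fin n,
      ¬ LinearIndependent ℂ
        ![(fun x : Fin n → ℂ => ∑ l, C i l * x l),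
          (fun x : Fin n → ℂ => ∑ l, C j l * x l),
          (fun x : Fin n → ℂ => ∑ l, C k l * x l)] := by
  intro i j k hli
  have hab : ∃ a b, C a b ≠ C b a := by
    by_contra h
    push_neg at h
    exact hsym (Matrix.ext fun a b => h b a)
  obtain ⟨a, b, hab⟩ := hab
  set d : ℂ := C b a - C a b with hdef
  have hd : d ≠ 0 := sub_ne_zero.mpr (Ne.symm hab)
  set fa : (Fin n → ℂ) → ℂ := fun x => ∑ l, C a l * x l with hfa
  set fb : (Fin n → ℂ) → ℂ := fun x => ∑ l, C b l * x l with hfb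
  set α : Fin n → ℂ := fun m => -(d⁻¹ * (C m b - C b m)) with hα
  set β : Fin n → ℂ := fun m => d⁻¹ * (C m a - C a m) with hβ
  have key : ∀ m : Fin n, (fun x : Fin n → ℂ => ∑ l, C m l * x l)
      = α m • fa + β m • fb := by
    intro m
    funext x
    have h := hint a b m x
    simp only [Pi.add_apply, Pi.smul_apply, smul_eq_mul, hα, hβ, hfa, hfb]
    field_simp
    linear_combination h
  let T : (Fin 2 → ℂ) →ₗ[ℂ] ((Fin n → ℂ) → ℂ) :=
    (LinearMap.proj 0).smulRight fa + (LinearMap.proj 1).smulRight fb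
  let v : Fin 3 → Fin 2 → ℂ := ![![α i, β i], ![α j, β j], ![α k, β k]]
  have hcomp : T ∘ v = ![(fun x : Fin n → ℂ => ∑ l, C i l * x l),
          (fun x : Fin n → ℂ => ∑ l, C j l * x l),
          (fun x : Fin n → ℂ => ∑ l, C k l * x l)] := by
    funext t
    fin_cases t <;>
      simp [T, v, key, LinearMap.smulRight_apply, LinearMap.proj_apply]
  have hliv : LinearIndependent ℂ (T ∘ v) := by rw [hcomp]; exact hli
  have hv : LinearIndependent ℂ v := LinearIndependent.of_comp T hliv
  have hcard := hv.fintype_card_le_finrank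
  simp [Module.finrank_pi] at hcard
end

section
/- Let n be a natural number and C = (c_{ij}) an n×n complex matrix, and for each index i let c_i : ℂⁿ → ℂ be the linear form c_i(x) = Σ_j c_{ij} x_j. Assume that for all indices i, j, k and all x ∈ ℂⁿ one has c_i(x)(c_{kj} − c_{jk}) − c_j(x)(c_{ki} − c_{ik}) + c_k(x)(c_{ji} − c_{ij}) = 0. If C is not symmetric (i.e. there exist j, k with c_{kj} ≠ c_{jk}), then the rank of the matrix C is at most 2. -/
/-- If the coefficient matrix `C` of an integrable linear 1-form is not symmetric
(there exist `j, k` with `c_{kj} ≠ c_{jk}`), then the rank of `C` is at most 2. -/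
theorem stmt2 (n : ℕ) (C : Matrix (Fin n) (Fin n) ℂ)
    (hint : ∀ i j k : Fin n, ∀ x : Fin n → ℂ,
      (∑ l, C i l * x l) * (C k j - C j k)
      - (∑ l, C j l * x l) * (C k i - C i k)
      + (∑ l, C k l * x l) * (C j i - C i j) = 0)
    (hsym : ∃ j k : Fin n, C k j ≠ C j k) :
    C.rank ≤ 2 := by
  obtain ⟨j, k, hjk⟩ := hsym
  have hd : C k j - C j k ≠ 0 := sub_ne_zero.mpr hjk
  have key : ∀ i l, C i l =
      ((C k i - C i k) / (C k j - C j k)) * C j l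
      + ((C i j - C j i) / (C k j - C j k)) * C k l := by
    intro i l
    have h := hint i j k (Pi.single l 1)
    simp only [Pi.single_apply, mul_ite, mul_one, mul_zero,
      Finset.sum_ite_eq', Finset.mem_univ, if_true] at h
    field_simp
    linear_combination h
  set A : Matrix (Fin n) (Fin 2) ℂ := fun i m =>
    if m = 0 then (C k i - C i k) / (C k j - C j k)
    else ((C i j - C j i) / (C k j - C j k)) with hA
  set B : Matrix (Fin 2) (Fin n) ℂ := fun m l => if m = 0 then C j l else C k l with hB
  have hCB : C = A * B := by
    ext i l
    rw [Matrix.mul_apply, Fin.sum_univ_two]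
    simp [hA, hB]
    exact key i l
  calc C.rank = (A * B).rank := by rw [hCB]
    _ ≤ A.rank := Matrix.rank_mul_le_left A B
    _ ≤ Fintype.card (Fin 2) := A.rank_le_card_width
    _ = 2 := by simp
end

section
/- For every complex number c, the following two conditions are equivalent: (i) for every rational number r ≥ 0, c² ≠ (16 + r)²/(16 + 2r); (ii) for every rational number s with 0 < s ≤ 1, c ≠ 2(√s + 1/√s) and c ≠ −2(√s + 1/√s), where √s denotes the nonnegative real square root of s, regarded as a complex number. -/
lemma stmt5_aux (s : ℚ) (hs : 0 < s) (r : ℚ) (hr : 0 ≤ r) (hrs : s * (8 + r) = 8) :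
    (2 * ((Real.sqrt (s : ℝ) : ℂ) + 1 / (Real.sqrt (s : ℝ) : ℂ))) ^ 2
      = (16 + (r : ℂ)) ^ 2 / (16 + 2 * (r : ℂ)) := by
  set t : ℂ := ((Real.sqrt (s : ℝ) : ℝ) : ℂ) with htdef
  have hsR : (0:ℝ) < (s:ℝ) := by exact_mod_cast hs
  have ht2 : t ^ 2 = (s : ℂ) := by
    rw [htdef]
    norm_cast
    exact Real.sq_sqrt hsR.le
  have htne : t ≠ 0 := by
    rw [htdef]
    exact_mod_cast (Real.sqrt_pos.mpr hsR).ne'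
  have hts : t ^ 2 * (8 + (r:ℂ)) = 8 := by
    rw [ht2]; exact_mod_cast hrs
  have hden : (16 + 2 * (r : ℂ)) ≠ 0 := by
    have : (0:ℚ) < 16 + 2 * r := by linarith
    exact_mod_cast this.ne'
  have hs0 : (s : ℂ) ≠ 0 := by exact_mod_cast hs.ne'
  have hsC : (s : ℂ) * (8 + (r : ℂ)) = 8 := by exact_mod_cast hrs
  have key : (2 * (t + 1 / t)) ^ 2 = 4 * ((s:ℂ) + 1) ^ 2 / (s:ℂ) := by
    rw [← ht2]
    field_simp
    ring
  rw [key, div_eq_div_iff hs0 hden]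
  linear_combination (8 * (s:ℂ) - (8 + (r:ℂ))) * hsC

/-- For `c ∈ ℂ`, the condition `c² ≠ (16 + r)²/(16 + 2r)` for all rationals `r ≥ 0` is
equivalent to Meziani's property `𝒫₂`: `c ≠ ±2(√s + 1/√s)` for all rationals `s ∈ (0,1]`. -/
theorem stmt5 (c : ℂ) :
    (∀ r : ℚ, 0 ≤ r → c ^ 2 ≠ (16 + (r : ℂ)) ^ 2 / (16 + 2 * (r : ℂ)))
    ↔ (∀ s : ℚ, 0 < s → s ≤ 1 →
        c ≠ 2 * ((Real.sqrt (s : ℝ) : ℂ) + 1 / (Real.sqrt (s : ℝ) : ℂ)) ∧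
        c ≠ -2 * ((Real.sqrt (s : ℝ) : ℂ) + 1 / (Real.sqrt (s : ℝ) : ℂ))) := by
  constructor
  · intro h s hs hs1
    have hr : (0:ℚ) ≤ 8 * (1 - s) / s :=
      div_nonneg (by nlinarith) hs.le
    have hrs : s * (8 + 8 * (1 - s) / s) = 8 := by
      field_simp
      ring
    have key := h (8 * (1 - s) / s) hr
    have hsq := stmt5_aux s hs (8 * (1 - s) / s) hr hrs
    constructor
    · intro hc
      exact key (by rw [hc, hsq])
    · intro hc
      apply key
      rw [← hsq, hc]
      ring
  · intro h r hr
    have h8 : (0:ℚ) < 8 + r := by linarith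
    set s : ℚ := 8 / (8 + r) with hsdef
    have hs : 0 < s := div_pos (by norm_num) h8
    have hs1 : s ≤ 1 := by rw [hsdef, div_le_one h8]; linarith
    have hrs : s * (8 + r) = 8 := by
      rw [hsdef]; field_simp
    obtain ⟨h1, h2⟩ := h s hs hs1
    intro hcsq
    have hsq := stmt5_aux s hs r hr hrs
    set a : ℂ := 2 * ((Real.sqrt (s : ℝ) : ℂ) + 1 / (Real.sqrt (s : ℝ) : ℂ)) with hadef
    have hz : (c - a) * (c + a) = 0 := by
      linear_combination hcsq - hsq
    rcases mul_eq_zero.mp hz with hz' | hz'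
    · exact h1 (sub_eq_zero.mp hz')
    · apply h2
      have : c = -a := eq_neg_of_add_eq_zero_left hz'
      rw [this, hadef]; ring
end

section
/- Let p = 2a and q = 2b be positive even integers, d = gcd(p,q), p = d·p', q = d·q', let k be a natural number and h : ℂ → ℂ any function. Define π : ℂ³ → ℂ³ by π(x,y,t) = (x, y, x^a y^b t), and for (x,y,z) ∈ ℂ³ define the linear form ω(x,y,z) : ℂ³ → ℂ by ω(x,y,z)(u,v,w) = p x^{p−1} y^q · u + q x^p y^{q−1} · v + (2z + (x^{p'}y^{q'})^k · h(x^{p'}y^{q'})) · w. Then π is complex differentiable and, for all (x,y,t) ∈ ℂ³ and all (u,v,w) ∈ ℂ³, the pullback satisfies ω(π(x,y,t))(Dπ(x,y,t)(u,v,w)) = x^{p−1} y^{q−1} · ((t² + 1)(p·y·u + q·x·v) + 2·x·y·t·w) + (x^{p'}y^{q'})^k · h(x^{p'}y^{q'}) · (a·x^{a−1} y^b·t·u + b·x^a y^{b−1}·t·v + x^a y^b·w), where Dπ(x,y,t) denotes the Fréchet derivative of π at (x,y,t). -/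
/-! Along `z = x^a y^b t` both `z²` and `x^p y^q` become `x^p y^q` times a function of `t`
(namely `t²` and `1`), so the pullback of the exact part `d(z² + x^p y^q)` is divisible by
`x^{p-1} y^{q-1}`; the `dz` part pulls back to `d(x^a y^b t)` by the chain rule. -/

section BlowUp

variable {𝕜 : Type*} [NontriviallyNormedField 𝕜]

def blowUp (a b : ℕ) (v : 𝕜 × 𝕜 × 𝕜) : 𝕜 × 𝕜 × 𝕜 :=
  (v.1, v.2.1, v.1 ^ a * v.2.1 ^ b * v.2.2)

theorem differentiable_blowUp (a b : ℕ) : Differentiable 𝕜 (blowUp (𝕜 := 𝕜) a b) := by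
  unfold blowUp
  fun_prop

theorem fderiv_blowUp_apply (a b : ℕ) (x y t u v w : 𝕜) :
    fderiv 𝕜 (blowUp a b) (x, y, t) (u, v, w) =
      (u, v, a * x ^ (a - 1) * y ^ b * t * u + b * x ^ a * y ^ (b - 1) * t * v
        + x ^ a * y ^ b * w) := by
  have hx : HasFDerivAt (fun v : 𝕜 × 𝕜 × 𝕜 => v.1)
      (ContinuousLinearMap.fst 𝕜 𝕜 (𝕜 × 𝕜)) (x, y, t) := hasFDerivAt_fst
  have hy : HasFDerivAt (fun v : 𝕜 × 𝕜 × 𝕜 => v.2.1)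
      ((ContinuousLinearMap.fst 𝕜 𝕜 𝕜).comp (ContinuousLinearMap.snd 𝕜 𝕜 (𝕜 × 𝕜))) (x, y, t) :=
    hasFDerivAt_snd.fst
  have ht : HasFDerivAt (fun v : 𝕜 × 𝕜 × 𝕜 => v.2.2)
      ((ContinuousLinearMap.snd 𝕜 𝕜 𝕜).comp (ContinuousLinearMap.snd 𝕜 𝕜 (𝕜 × 𝕜))) (x, y, t) :=
    hasFDerivAt_snd.snd
  have hmonomial := (((hasDerivAt_pow a x).comp_hasFDerivAt _ hx).mul
    ((hasDerivAt_pow b y).comp_hasFDerivAt _ hy)).mul ht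
  rw [HasFDerivAt.fderiv (f := blowUp a b) (hx.prodMk (hy.prodMk hmonomial))]
  simp only [ContinuousLinearMap.prod_apply, add_apply, smul_apply, ContinuousLinearMap.coe_comp,
    Function.comp_apply, ContinuousLinearMap.coe_fst', ContinuousLinearMap.coe_snd', smul_eq_mul,
    Pi.mul_apply]
  ring_nf

end BlowUp

theorem pullback_d_cusp_eq {R : Type*} [CommRing R] {a b : ℕ} (ha : 1 ≤ a) (hb : 1 ≤ b)
    (x y t u v w : R) :
    ((2 * a : ℕ) : R) * x ^ (2 * a - 1) * y ^ (2 * b) * u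
      + ((2 * b : ℕ) : R) * x ^ (2 * a) * y ^ (2 * b - 1) * v
      + 2 * (x ^ a * y ^ b * t) * (a * x ^ (a - 1) * y ^ b * t * u
        + b * x ^ a * y ^ (b - 1) * t * v + x ^ a * y ^ b * w) =
    x ^ (2 * a - 1) * y ^ (2 * b - 1) *
      ((t ^ 2 + 1) * (((2 * a : ℕ) : R) * y * u + ((2 * b : ℕ) : R) * x * v)
        + 2 * x * y * t * w) := by
  obtain ⟨m, rfl⟩ : ∃ m, a = m + 1 := ⟨a - 1, by omega⟩
  obtain ⟨n, rfl⟩ : ∃ n, b = n + 1 := ⟨b - 1, by omega⟩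
  rw [show 2 * (m + 1) - 1 = 2 * m + 1 by omega, show 2 * (n + 1) - 1 = 2 * n + 1 by omega,
    Nat.add_sub_cancel, Nat.add_sub_cancel]
  push_cast
  ring

theorem stmt10_general (a b : ℕ) (ha : 1 ≤ a) (hb : 1 ≤ b)
    (p q p' q' k : ℕ) (hp : p = 2 * a) (hq : q = 2 * b)
    (h : ℂ → ℂ)
    (π : ℂ × ℂ × ℂ → ℂ × ℂ × ℂ)
    (hπ : π = fun v : ℂ × ℂ × ℂ => (v.1, v.2.1, v.1 ^ a * v.2.1 ^ b * v.2.2))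
    (ω : ℂ × ℂ × ℂ → ℂ × ℂ × ℂ → ℂ)
    (hω : ω = fun z v : ℂ × ℂ × ℂ =>
      (p : ℂ) * z.1 ^ (p - 1) * z.2.1 ^ q * v.1
      + (q : ℂ) * z.1 ^ p * z.2.1 ^ (q - 1) * v.2.1
      + (2 * z.2.2 + (z.1 ^ p' * z.2.1 ^ q') ^ k * h (z.1 ^ p' * z.2.1 ^ q')) * v.2.2) :
    Differentiable ℂ π ∧
    ∀ x y t u v w : ℂ,
      ω (π (x, y, t)) (fderiv ℂ π (x, y, t) (u, v, w)) =
        x ^ (p - 1) * y ^ (q - 1) *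
            ((t ^ 2 + 1) * ((p : ℂ) * y * u + (q : ℂ) * x * v) + 2 * x * y * t * w)
        + (x ^ p' * y ^ q') ^ k * h (x ^ p' * y ^ q') *
            ((a : ℂ) * x ^ (a - 1) * y ^ b * t * u
              + (b : ℂ) * x ^ a * y ^ (b - 1) * t * v
              + x ^ a * y ^ b * w) := by
  have hπ_eq : π = blowUp a b := hπ
  subst hω hp hq
  refine ⟨hπ_eq ▸ differentiable_blowUp a b, fun x y t u v w => ?_⟩
  rw [hπ_eq, fderiv_blowUp_apply]
  simp only [blowUp]
  linear_combination pullback_d_cusp_eq ha hb x y t u v w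

/-- Pullback of the 1-form `ω = d(z² + x^p y^q) + (x^{p'}y^{q'})^k h(x^{p'}y^{q'}) dz`
(with `p = 2a`, `q = 2b` even) under the composed blow-up map
`π(x,y,t) = (x, y, x^a y^b t)`: `π` is holomorphic and the pullback `π*ω` equals
`x^{p−1} y^{q−1}·((t²+1)(p y u + q x v) + 2 x y t w)
  + (x^{p'}y^{q'})^k h(x^{p'}y^{q'})·(a x^{a−1} y^b t u + b x^a y^{b−1} t v + x^a y^b w)`. -/
theorem stmt10 (a b : ℕ) (ha : 1 ≤ a) (hb : 1 ≤ b)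
    (p q d p' q' k : ℕ) (hp : p = 2 * a) (hq : q = 2 * b)
    (hd : d = Nat.gcd p q) (hp' : p = d * p') (hq' : q = d * q')
    (h : ℂ → ℂ)
    (π : ℂ × ℂ × ℂ → ℂ × ℂ × ℂ)
    (hπ : π = fun v : ℂ × ℂ × ℂ => (v.1, v.2.1, v.1 ^ a * v.2.1 ^ b * v.2.2))
    (ω : ℂ × ℂ × ℂ → ℂ × ℂ × ℂ → ℂ)
    (hω : ω = fun z v : ℂ × ℂ × ℂ =>
      (p : ℂ) * z.1 ^ (p - 1) * z.2.1 ^ q * v.1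
      + (q : ℂ) * z.1 ^ p * z.2.1 ^ (q - 1) * v.2.1
      + (2 * z.2.2 + (z.1 ^ p' * z.2.1 ^ q') ^ k * h (z.1 ^ p' * z.2.1 ^ q')) * v.2.2) :
    Differentiable ℂ π ∧
    ∀ x y t u v w : ℂ,
      ω (π (x, y, t)) (fderiv ℂ π (x, y, t) (u, v, w)) =
        x ^ (p - 1) * y ^ (q - 1) *
            ((t ^ 2 + 1) * ((p : ℂ) * y * u + (q : ℂ) * x * v) + 2 * x * y * t * w)
        + (x ^ p' * y ^ q') ^ k * h (x ^ p' * y ^ q') *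
            ((a : ℂ) * x ^ (a - 1) * y ^ b * t * u
              + (b : ℂ) * x ^ a * y ^ (b - 1) * t * v
              + x ^ a * y ^ b * w) :=
  stmt10_general a b ha hb p q p' q' k hp hq h π hπ ω hω
end
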